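/- arXiv:2412.12376 — 6 statements merged into one kernel-verified Lean document; each statement's English description precedes it below -/
import Mathlib

section
/- For every integer n ≥ 1, the subgroup of GL(2,ℂ) generated by the matrices x = !![0,-1;1,0] and a = !![exp(πi/n),0;0,exp(-πi/n)] has order 4n and is isomorphic to the dicyclic group of order 4n, i.e. to the group with presentation ⟨a,x | a^{2n}=1, x² = aⁿ, x⁻¹ a x = a⁻¹⟩ (Mathlib's QuaternionGroup n). -/
/-
The diagonal matrix `A = diag(ζ, ζ⁻¹)` with `ζ = exp(πi/n)` has order `2n`, because `ζ` is a
primitive `2n`-th root of unity, and `X = !![0,-1;1,0]` satisfies `X² = -1 = Aⁿ` and `AXA = X`.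
These are the defining relations of `QuaternionGroup n`, so `a i ↦ A^i`, `xa i ↦ X A^i` is a
homomorphism onto `⟨X, A⟩`. Its kernel is trivial: `A^i = 1` forces `2n ∣ i`, and `X A^i` is never
`1` since `X` has a nonzero off-diagonal entry while every power of `A` is diagonal.
-/
section PowVal

variable {G : Type*} [Group G] {m : ℕ} {a : G}

theorem pow_val_natCast_of_pow_eq_one (ha : a ^ m = 1) (k : ℕ) :
    a ^ (k : ZMod m).val = a ^ k := by
  rw [ZMod.val_natCast, ← pow_eq_pow_mod _ ha]

theorem pow_mul_eq_mul_inv_pow {x : G} (hax : a * x * a = x) (k : ℕ) :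
    a ^ k * x = x * (a ^ k)⁻¹ := by
  have hconj : SemiconjBy x a⁻¹ a := by
    rw [SemiconjBy, mul_inv_eq_iff_eq_mul, hax]
  rw [← inv_pow, (hconj.pow_right k).eq]

variable [NeZero m]

theorem pow_val_add_of_pow_eq_one (ha : a ^ m = 1) (i j : ZMod m) :
    a ^ (i + j).val = a ^ i.val * a ^ j.val := by
  rw [ZMod.val_add, ← pow_eq_pow_mod _ ha, pow_add]

theorem pow_val_neg_of_pow_eq_one (ha : a ^ m = 1) (i : ZMod m) :
    a ^ (-i).val = (a ^ i.val)⁻¹ := by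
  rw [eq_inv_iff_mul_eq_one, ← pow_val_add_of_pow_eq_one ha, neg_add_cancel, ZMod.val_zero,
    pow_zero]

end PowVal

namespace QuaternionGroup

variable {G : Type*} [Group G] {n : ℕ} [NeZero n] {a x : G}

def lift (ha : a ^ (2 * n) = 1) (hx : x ^ 2 = a ^ n) (hax : a * x * a = x) :
    QuaternionGroup n →* G where
  toFun
    | .a i => a ^ i.val
    | .xa i => x * a ^ i.val
  map_one' := by rw [one_def]; simp
  map_mul' := by
    rintro (i | i) (j | j)
    · exact pow_val_add_of_pow_eq_one ha i j
    · simp only [a_mul_xa]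
      rw [sub_eq_neg_add, pow_val_add_of_pow_eq_one ha, pow_val_neg_of_pow_eq_one ha,
        ← mul_assoc, ← mul_assoc, pow_mul_eq_mul_inv_pow hax]
    · simp only [xa_mul_a]
      rw [pow_val_add_of_pow_eq_one ha, mul_assoc]
    · simp only [xa_mul_xa]
      rw [add_sub_assoc, sub_eq_neg_add, pow_val_add_of_pow_eq_one ha,
        pow_val_add_of_pow_eq_one ha, pow_val_natCast_of_pow_eq_one ha,
        pow_val_neg_of_pow_eq_one ha, ← hx, mul_assoc x, ← mul_assoc (a ^ i.val),
        pow_mul_eq_mul_inv_pow hax, sq]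
      simp only [mul_assoc]

section Lift

variable (ha : a ^ (2 * n) = 1) (hx : x ^ 2 = a ^ n) (hax : a * x * a = x)

theorem lift_injective (hord : orderOf a = 2 * n) (hxa : x ∉ Subgroup.zpowers a) :
    Function.Injective (lift ha hx hax) := by
  refine (injective_iff_map_eq_one _).mpr ?_
  rintro (i | i) h
  · have hi : i.val = 0 := by
      by_contra hi
      exact pow_ne_one_of_lt_orderOf hi (by rw [hord]; exact i.val_lt) h
    rw [(ZMod.val_eq_zero i).mp hi, a_zero]
  · refine absurd ?_ hxa
    rw [eq_inv_of_mul_eq_one_left h]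
    exact inv_mem (Subgroup.npow_mem_zpowers a _)

theorem range_lift : (lift ha hx hax).range = Subgroup.closure {x, a} := by
  have hxc : x ∈ Subgroup.closure {x, a} := Subgroup.subset_closure (by simp)
  have hac : a ∈ Subgroup.closure {x, a} := Subgroup.subset_closure (by simp)
  apply le_antisymm
  · rintro _ ⟨i | i, rfl⟩
    · exact pow_mem hac i.val
    · exact mul_mem hxc (pow_mem hac i.val)
  · rw [Subgroup.closure_le]
    rintro _ (rfl | rfl)
    · exact ⟨xa 0, by simp [lift]⟩
    · exact ⟨.a 1, by simpa [lift] using pow_val_natCast_of_pow_eq_one ha 1⟩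

end Lift

theorem nonempty_closure_mulEquiv (hord : orderOf a = 2 * n) (hx : x ^ 2 = a ^ n)
    (hax : a * x * a = x) (hxa : x ∉ Subgroup.zpowers a) :
    Nonempty (Subgroup.closure {x, a} ≃* QuaternionGroup n) := by
  have ha : a ^ (2 * n) = 1 := hord ▸ pow_orderOf_eq_one a
  exact ⟨(MulEquiv.subgroupCongr (range_lift ha hx hax).symm).trans
    (MonoidHom.ofInjective (lift_injective ha hx hax hord hxa)).symm⟩

end QuaternionGroup

namespace Matrix.GeneralLinearGroup

variable {R : Type*} [CommRing R]

def diag2Hom : Rˣ →* GL (Fin 2) R where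
  toFun u := ⟨!![(u : R), 0; 0, ↑u⁻¹], !![↑u⁻¹, 0; 0, (u : R)], by simp [one_fin_two],
    by simp [one_fin_two]⟩
  map_one' := by ext i j; fin_cases i <;> fin_cases j <;> simp
  map_mul' u v := by ext i j; fin_cases i <;> fin_cases j <;> simp [mul_comm]

theorem coe_diag2Hom (u : Rˣ) :
    (diag2Hom u : Matrix (Fin 2) (Fin 2) R) = !![(u : R), 0; 0, ↑u⁻¹] :=
  rfl

theorem diag2Hom_injective : Function.Injective (diag2Hom (R := R)) := fun u v h =>
  Units.ext (by simpa [coe_diag2Hom] using congrArg (fun g : GL (Fin 2) R => g.1 0 0) h)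

theorem coe_apply_zero_one_of_mem_zpowers_diag2Hom {u : Rˣ} {g : GL (Fin 2) R}
    (hg : g ∈ Subgroup.zpowers (diag2Hom u)) : (g : Matrix (Fin 2) (Fin 2) R) 0 1 = 0 := by
  rw [← MonoidHom.map_zpowers] at hg
  obtain ⟨v, -, rfl⟩ := hg
  simp [coe_diag2Hom]

theorem coe_diag2Hom_mul_antidiag_mul (u : Rˣ) (b c : R) :
    (diag2Hom u : Matrix (Fin 2) (Fin 2) R) * !![0, b; c, 0] * diag2Hom u = !![0, b; c, 0] := by
  simp only [coe_diag2Hom, mul_fin_two]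
  simp [mul_right_comm _ b, mul_right_comm _ c]

theorem nonempty_closure_mulEquiv_quaternionGroup [IsDomain R] {n : ℕ} [NeZero n] {ζ : Rˣ}
    (hζ : IsPrimitiveRoot (ζ : R) (2 * n)) (X : GL (Fin 2) R)
    (hX : (X : Matrix (Fin 2) (Fin 2) R) = !![0, -1; 1, 0]) :
    Nonempty (Subgroup.closure {X, diag2Hom ζ} ≃* QuaternionGroup n) := by
  have hζn : ζ ^ n = -1 := by
    have h2 := hζ.pow_of_dvd (NeZero.ne n) (dvd_mul_left n 2)
    rw [Nat.mul_div_cancel _ (NeZero.pos n)] at h2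
    exact Units.ext (by simpa using h2.eq_neg_one_of_two_right)
  refine QuaternionGroup.nonempty_closure_mulEquiv ?_ ?_ ?_ ?_
  · rw [orderOf_injective _ diag2Hom_injective, ← orderOf_units, hζ.eq_orderOf]
  · ext i j
    rw [← map_pow, hζn]
    fin_cases i <;> fin_cases j <;> simp [sq, hX, coe_diag2Hom]
  · exact Units.ext <| by simpa [hX] using coe_diag2Hom_mul_antidiag_mul ζ (-1) 1
  · intro hmem
    simpa [hX] using coe_apply_zero_one_of_mem_zpowers_diag2Hom hmem

end Matrix.GeneralLinearGroup

open Matrix.GeneralLinearGroup in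
/-- For every integer `n ≥ 1`, the subgroup of `GL₂(ℂ)` generated by
`x = !![0,-1;1,0]` and `a = !![exp(πi/n),0;0,exp(-πi/n)]` has order `4n` and is
isomorphic to the dicyclic (generalised quaternion) group `QuaternionGroup n` of order `4n`. -/
theorem closure_x_a_card_and_iso_quaternionGroup
    (n : ℕ) (hn : 1 ≤ n) (X A : GL (Fin 2) ℂ)
    (hX : (X : Matrix (Fin 2) (Fin 2) ℂ) = !![0, -1; 1, 0])
    (hA : (A : Matrix (Fin 2) (Fin 2) ℂ) =
      !![Complex.exp (Real.pi * Complex.I / n), 0;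
         0, Complex.exp (-(Real.pi * Complex.I / n))]) :
    Nat.card (Subgroup.closure {X, A} : Subgroup (GL (Fin 2) ℂ)) = 4 * n ∧
      Nonempty ((Subgroup.closure {X, A} : Subgroup (GL (Fin 2) ℂ)) ≃* QuaternionGroup n) := by
  have : NeZero n := ⟨by omega⟩
  have hζ : IsPrimitiveRoot (Complex.exp (Real.pi * Complex.I / n)) (2 * n) := by
    convert Complex.isPrimitiveRoot_exp (2 * n) (NeZero.ne _) using 2
    push_cast
    ring
  let ζ : ℂˣ := Units.mk0 (Complex.exp (Real.pi * Complex.I / n)) (Complex.exp_ne_zero _)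
  have hAζ : A = diag2Hom ζ := Units.ext <| by
    simp [hA, coe_diag2Hom, ζ, Complex.exp_neg]
  rw [hAζ]
  obtain ⟨e⟩ := nonempty_closure_mulEquiv_quaternionGroup (ζ := ζ) hζ X hX
  exact ⟨by rw [Nat.card_congr e.toEquiv, Nat.card_eq_fintype_card, QuaternionGroup.card], ⟨e⟩⟩
end

section
/- Fix θ ∈ ℝ with θ/π irrational. The subgroup Dic∞ of GL(2,ℂ) generated by the matrices x = !![0,-1;1,0] and a = !![exp(iθ),0;0,exp(-iθ)] is isomorphic to the group presented by two generators x, a subject to the relations x⁴ = 1 and x⁻¹ a x = a⁻¹ (the infinite dicyclic group). -/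
/-!
Since `x` conjugates `a` to `a⁻¹`, it normalizes `⟨a⟩`, so every element of `⟨x, a⟩` has the
form `aⁿ xᵏ`. In the presented group `x⁴ = 1`, so `k` only matters mod 4, and the canonical map
onto `⟨X, A⟩` is injective once `A` has infinite order and `X² ≠ 1`: an element `aⁿ xᵏ` of the
kernel with `k ≢ 0 mod 4` would put `X` (or `X³ = X⁻¹`) or `X²` into `⟨A⟩`. But `X ∈ ⟨A⟩` commutes
with `A`, forcing `A = A⁻¹`, and `X² = Aᵐ` gives `A²ᵐ = X⁴ = 1`, hence `m = 0`. For the matrices,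
`X² = -1`, and `A` has infinite order because `exp(iθ)` is not a root of unity when `θ/π` is
irrational.
-/

open Matrix

/-- The defining relations of the infinite dicyclic group on two generators:
`true` stands for the generator `x`, `false` for the generator `a`; the relations are
`x⁴ = 1` and `x⁻¹ * a * x * a = 1` (i.e. `x⁻¹ a x = a⁻¹`). -/
def dicyclicInfRels : Set (FreeGroup Bool) :=
  {(FreeGroup.of true) ^ 4,
    (FreeGroup.of true)⁻¹ * FreeGroup.of false * FreeGroup.of true * FreeGroup.of false}

open Subgroup
open scoped Pointwise

section Group

variable {G : Type*} [Group G] {x a : G}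

theorem inv_mul_mul_eq_inv_iff : x⁻¹ * a * x = a⁻¹ ↔ a * x * a = x := by
  rw [← mul_eq_one_iff_eq_inv, mul_assoc, mul_assoc, ← mul_assoc a, inv_mul_eq_one, eq_comm]

theorem coe_closure_pair_eq_zpowers_mul (hxa : x⁻¹ * a * x = a⁻¹) :
    (closure {x, a} : Set G) = zpowers a * zpowers x := by
  have hx : x⁻¹ ∈ normalizer (zpowers a : Set G) := by
    rw [mem_normalizer_iff_map_conj_eq, zpowers_eq_closure, MonoidHom.map_closure,
      Set.image_singleton, MonoidHom.coe_coe, MulAut.conj_apply, inv_inv, hxa,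
      closure_singleton_inv]
  rw [← coe_mul_of_right_le_normalizer_left _ _ (zpowers_le.mpr (inv_mem_iff.mp hx)),
    Set.insert_eq, Subgroup.closure_union, sup_comm, zpowers_eq_closure, zpowers_eq_closure]

theorem exists_zpow_mul_zpow_eq_of_mem_closure_pair (hxa : x⁻¹ * a * x = a⁻¹) {g : G}
    (hg : g ∈ closure {x, a}) : ∃ n k : ℤ, a ^ n * x ^ k = g := by
  rw [← SetLike.mem_coe, coe_closure_pair_eq_zpowers_mul hxa] at hg
  obtain ⟨_, ⟨n, rfl⟩, _, ⟨k, rfl⟩, rfl⟩ := hg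
  exact ⟨n, k, rfl⟩

theorem notMem_zpowers_of_inv_mul_mul_eq_inv (hxa : x⁻¹ * a * x = a⁻¹)
    (ha : ¬IsOfFinOrder a) : x ∉ zpowers a := by
  rw [mem_zpowers_iff]
  rintro ⟨m, rfl⟩
  rw [mul_assoc, ((Commute.refl a).zpow_left m).symm.eq, inv_mul_cancel_left,
    eq_inv_iff_mul_eq_one] at hxa
  exact ha (isOfFinOrder_iff_pow_eq_one.mpr ⟨2, two_pos, by rw [sq, hxa]⟩)

theorem sq_notMem_zpowers (hx : x ^ 4 = 1) (ha : ¬IsOfFinOrder a) (hx2 : x ^ 2 ≠ 1) :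
    x ^ 2 ∉ zpowers a := by
  rw [mem_zpowers_iff]
  rintro ⟨m, hm⟩
  have h2m : a ^ (2 * m) = a ^ (0 : ℤ) := by
    rw [zpow_zero, mul_comm, _root_.zpow_mul, hm, zpow_ofNat, ← pow_mul, hx]
  have hm0 : m = 0 := by
    simpa using injective_zpow_iff_not_isOfFinOrder.mpr ha h2m
  rw [hm0, zpow_zero] at hm
  exact hx2 hm.symm

theorem eq_zero_and_dvd_of_zpow_mul_zpow_eq_one (hx : x ^ 4 = 1) (hxa : x⁻¹ * a * x = a⁻¹)
    (ha : ¬IsOfFinOrder a) (hx2 : x ^ 2 ≠ 1) {n k : ℤ} (h : a ^ n * x ^ k = 1) :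
    n = 0 ∧ 4 ∣ k := by
  have hxk : x ^ k = x ^ (k % 4) := by exact_mod_cast zpow_eq_zpow_emod' k hx
  have hk : x ^ (k % 4) ∈ zpowers a := by
    rw [← hxk, eq_inv_of_mul_eq_one_right h]
    exact inv_mem (zpow_mem_zpowers a n)
  have hx1 := notMem_zpowers_of_inv_mul_mul_eq_inv hxa ha
  have h0 : 0 ≤ k % 4 := Int.emod_nonneg k (by norm_num)
  have h4 : k % 4 < 4 := Int.emod_lt_of_pos k (by norm_num)
  interval_cases hr : k % 4
  · rw [hxk, zpow_zero, mul_one, ← zpow_zero a] at h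
    exact ⟨injective_zpow_iff_not_isOfFinOrder.mpr ha h, Int.dvd_of_emod_eq_zero hr⟩
  · exact absurd (by simpa using hk) hx1
  · exact absurd (by simpa using hk) (sq_notMem_zpowers hx ha hx2)
  · have hx3 : x = (x ^ 3)⁻¹ := eq_inv_of_mul_eq_one_right (by rw [← pow_succ, hx])
    exact absurd (hx3 ▸ inv_mem (by simpa using hk)) hx1

namespace DicyclicInf

theorem of_true_pow_four :
    (PresentedGroup.of true : PresentedGroup dicyclicInfRels) ^ 4 = 1 :=
  PresentedGroup.one_of_mem (Set.mem_insert _ _)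

theorem inv_of_true_mul_of_false_mul_of_true :
    (PresentedGroup.of true : PresentedGroup dicyclicInfRels)⁻¹ * .of false * .of true =
      (.of false)⁻¹ :=
  mul_eq_one_iff_eq_inv.mp (PresentedGroup.one_of_mem (Set.mem_insert_of_mem _ rfl))

def lift (hx : x ^ 4 = 1) (hxa : x⁻¹ * a * x = a⁻¹) : PresentedGroup dicyclicInfRels →* G :=
  PresentedGroup.toGroup (f := fun b => cond b x a) <| by
    rintro r (rfl | rfl)
    · simpa using hx
    · simpa [mul_eq_one_iff_eq_inv] using hxa

theorem range_lift (hx : x ^ 4 = 1) (hxa : x⁻¹ * a * x = a⁻¹) :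
    (lift hx hxa).range = closure {x, a} := by
  rw [MonoidHom.range_eq_map, ← PresentedGroup.closure_range_of, MonoidHom.map_closure,
    ← Set.range_comp, Bool.range_eq, Set.pair_comm]
  simp [lift, PresentedGroup.toGroup.of]

theorem lift_injective (hx : x ^ 4 = 1) (hxa : x⁻¹ * a * x = a⁻¹) (ha : ¬IsOfFinOrder a)
    (hx2 : x ^ 2 ≠ 1) : Function.Injective (lift hx hxa) := by
  rw [injective_iff_map_eq_one]
  intro p hp
  have hp_mem : p ∈ closure {PresentedGroup.of true, PresentedGroup.of false} := by
    rw [Set.pair_comm, ← Bool.range_eq, PresentedGroup.closure_range_of]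
    exact mem_top p
  obtain ⟨n, k, rfl⟩ :=
    exists_zpow_mul_zpow_eq_of_mem_closure_pair inv_of_true_mul_of_false_mul_of_true hp_mem
  simp only [map_mul, map_zpow, lift, PresentedGroup.toGroup.of, cond_true, cond_false] at hp
  obtain ⟨rfl, j, rfl⟩ := eq_zero_and_dvd_of_zpow_mul_zpow_eq_one hx hxa ha hx2 hp
  rw [zpow_zero, one_mul, _root_.zpow_mul, zpow_ofNat, of_true_pow_four, _root_.one_zpow]

end DicyclicInf

end Group

theorem Complex.not_isOfFinOrder_exp_mul_I {θ : ℝ} (hθ : Irrational (θ / Real.pi)) :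
    ¬IsOfFinOrder (Complex.exp (θ * Complex.I)) := by
  rw [isOfFinOrder_iff_pow_eq_one]
  rintro ⟨n, hn, h⟩
  rw [← Complex.exp_nat_mul, Complex.exp_eq_one_iff] at h
  obtain ⟨m, hm⟩ := h
  have hm' : (n * θ : ℝ) = (2 * m * Real.pi : ℝ) := by
    apply Complex.ofReal_injective
    apply mul_right_cancel₀ Complex.I_ne_zero
    push_cast
    linear_combination hm
  refine (hθ.mul_natCast hn.ne').ne_int (2 * m) ?_
  push_cast
  field_simp
  linear_combination hm'

namespace Matrix.GeneralLinearGroup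

variable {R : Type*} [CommRing R]

theorem not_isOfFinOrder_of_coe_eq_diag {A : GL (Fin 2) R} {z w : R}
    (hA : (A : Matrix (Fin 2) (Fin 2) R) = !![z, 0; 0, w]) (hz : ¬IsOfFinOrder z) :
    ¬IsOfFinOrder A := by
  rw [isOfFinOrder_iff_pow_eq_one] at hz ⊢
  rintro ⟨n, hn, hAn⟩
  refine hz ⟨n, hn, ?_⟩
  have hdiag : !![z, 0; 0, w] = diagonal ![z, w] := by
    ext i j
    fin_cases i <;> fin_cases j <;> rfl
  simpa [hA, hdiag, diagonal_pow] using
    congrArg (fun M : GL (Fin 2) R => (M : Matrix (Fin 2) (Fin 2) R) 0 0) hAn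

theorem sq_eq_neg_one_of_coe_eq {X : GL (Fin 2) R}
    (hX : (X : Matrix (Fin 2) (Fin 2) R) = !![0, -1; 1, 0]) : X ^ 2 = -1 := by
  ext i j
  fin_cases i <;> fin_cases j <;> simp [sq, hX]

theorem mul_mul_eq_of_coe_eq {X A : GL (Fin 2) R} {z w : R}
    (hX : (X : Matrix (Fin 2) (Fin 2) R) = !![0, -1; 1, 0])
    (hA : (A : Matrix (Fin 2) (Fin 2) R) = !![z, 0; 0, w]) (hzw : z * w = 1) :
    A * X * A = X := by
  ext i j
  fin_cases i <;> fin_cases j <;> simp [hX, hA, hzw, mul_comm w z]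

end Matrix.GeneralLinearGroup

open Matrix.GeneralLinearGroup in
/-- Fix `θ ∈ ℝ` with `θ/π` irrational.  The subgroup of `GL₂(ℂ)` generated by
`x = !![0,-1;1,0]` and `a = !![exp(iθ),0;0,exp(-iθ)]` is isomorphic to the group presented
by two generators `x, a` subject to the relations `x⁴ = 1` and `x⁻¹ a x = a⁻¹`
(the infinite dicyclic group). -/
theorem closure_x_a_iso_presented_dicyclicInf
    (θ : ℝ) (hθ : Irrational (θ / Real.pi)) (X A : GL (Fin 2) ℂ)
    (hX : (X : Matrix (Fin 2) (Fin 2) ℂ) = !![0, -1; 1, 0])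
    (hA : (A : Matrix (Fin 2) (Fin 2) ℂ) =
      !![Complex.exp (θ * Complex.I), 0; 0, Complex.exp (-(θ * Complex.I))]) :
    Nonempty ((Subgroup.closure {X, A} : Subgroup (GL (Fin 2) ℂ)) ≃*
      PresentedGroup dicyclicInfRels) := by
  have hX2 : X ^ 2 = -1 := sq_eq_neg_one_of_coe_eq hX
  have hX4 : X ^ 4 = 1 := by rw [show 4 = 2 * 2 from rfl, pow_mul, hX2, neg_one_sq]
  have hX2_ne : X ^ 2 ≠ 1 := by
    rw [hX2]
    intro h
    exact absurd (congrArg (fun M : GL (Fin 2) ℂ => (M : Matrix (Fin 2) (Fin 2) ℂ) 0 0) h)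
      (by norm_num)
  have hXA : X⁻¹ * A * X = A⁻¹ := inv_mul_mul_eq_inv_iff.mpr <|
    mul_mul_eq_of_coe_eq hX hA (by rw [← Complex.exp_add, add_neg_cancel, Complex.exp_zero])
  have hA_inf : ¬IsOfFinOrder A :=
    not_isOfFinOrder_of_coe_eq_diag hA (Complex.not_isOfFinOrder_exp_mul_I hθ)
  exact ⟨(MulEquiv.subgroupCongr (DicyclicInf.range_lift hX4 hXA)).symm.trans
    (MonoidHom.ofInjective (DicyclicInf.lift_injective hX4 hXA hA_inf hX2_ne)).symm⟩
end

section
/- Fix θ ∈ ℝ with θ/π irrational, and let Dic∞ be the subgroup of the unitary group U(2,ℂ) generated by x = !![0,-1;1,0] and a = !![exp(iθ),0;0,exp(-iθ)]. Then the topological closure of Dic∞ in U(2,ℂ) equals the subgroup of U(2,ℂ) generated by x together with all matrices !![exp(it),0;0,exp(-it)] for t ∈ ℝ. -/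
/-!
Write `D t = diag(e^{it}, e^{-it})` as `diagUnitary (Circle.exp t)` for the continuous embedding
`diagUnitary` of the circle onto the diagonal torus `T`. Since `X` has order 4 and conjugates
`diag(z, z⁻¹)` to `diag(z⁻¹, z)`, the group generated by `X` and `T` is `⟨X⟩ · T`, a finite union of
translates of a compact set, hence closed; it contains `Dic∞`. Conversely, `θ / π` irrational makes
the powers of `e^{iθ}` dense in the circle, so the closure of `Dic∞` contains `T`, and it contains `X`.
-/

open Matrix

theorem Subgroup.isCompact_sup_of_le_normalizer {G : Type*} [Group G] [TopologicalSpace G]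
    [ContinuousMul G] {H N : Subgroup G} (hH : IsCompact (H : Set G))
    (hN : IsCompact (N : Set G)) (hHN : H ≤ Subgroup.normalizer (N : Set G)) :
    IsCompact ((H ⊔ N : Subgroup G) : Set G) := by
  rw [Subgroup.coe_mul_of_left_le_normalizer_right H N hHN]
  exact hH.mul hN

theorem Circle.dense_zpowers_exp {θ : ℝ} (hθ : Irrational (θ / Real.pi)) :
    Dense (Subgroup.zpowers (Circle.exp θ) : Set Circle) := by
  have h : DenseRange (· • (θ : AddCircle (2 * Real.pi)) : ℤ → AddCircle (2 * Real.pi)) := by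
    rw [AddCircle.denseRange_zsmul_coe_iff, div_mul_eq_div_div_swap]
    exact_mod_cast hθ.div_natCast two_ne_zero
  have hexp : (Circle.exp θ ^ · : ℤ → Circle) =
      AddCircle.homeomorphCircle' ∘ (· • (θ : AddCircle (2 * Real.pi))) := by
    ext1 n
    rw [Function.comp_apply, ← AddCircle.coe_zsmul, AddCircle.homeomorphCircle'_apply_mk,
      Circle.exp_zsmul]
  rw [Subgroup.coe_zpowers, hexp]
  exact AddCircle.homeomorphCircle'.surjective.denseRange.comp h
    AddCircle.homeomorphCircle'.continuous

noncomputable def diagUnitary : Circle →* unitaryGroup (Fin 2) ℂ where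
  toFun z := ⟨diagonal ![(z : ℂ), ((z⁻¹ : Circle) : ℂ)], by
    rw [mem_unitaryGroup_iff, star_eq_conjTranspose, diagonal_conjTranspose, diagonal_mul_diagonal,
      ← diagonal_one]
    congr 1
    ext i
    fin_cases i <;> simp [-Circle.coe_inv, Complex.mul_conj]⟩
  map_one' := Subtype.ext <| by simp [diagonal_fin_two, one_fin_two]
  map_mul' z w := Subtype.ext <| by simp [diagonal_fin_two, mul_comm]

theorem coe_diagUnitary (z : Circle) :
    (diagUnitary z : Matrix (Fin 2) (Fin 2) ℂ) = !![(z : ℂ), 0; 0, (z : ℂ)⁻¹] := by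
  simp [diagUnitary, diagonal_fin_two]

theorem continuous_diagUnitary : Continuous diagUnitary := by
  refine continuous_induced_rng.2 (continuous_matrix fun i j => ?_)
  fin_cases i <;> fin_cases j <;> simp [diagUnitary, -Circle.coe_inv] <;> fun_prop

section
variable {X : unitaryGroup (Fin 2) ℂ} (hX : (X : Matrix (Fin 2) (Fin 2) ℂ) = !![0, -1; 1, 0])
include hX

theorem mul_diagUnitary_eq_diagUnitary_inv_mul (z : Circle) :
    X * diagUnitary z = diagUnitary z⁻¹ * X := by
  refine Subtype.ext ?_
  simp only [UnitaryGroup.mul_val, hX, coe_diagUnitary, mul_fin_two, Circle.coe_inv, inv_inv]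
  simp

theorem isOfFinOrder_of_coe_eq : IsOfFinOrder X := by
  refine isOfFinOrder_iff_pow_eq_one.2 ⟨4, by norm_num, Subtype.ext ?_⟩
  simp [hX, pow_succ, one_fin_two]

theorem mem_normalizer_range_diagUnitary :
    X ∈ Subgroup.normalizer (diagUnitary.range : Set (unitaryGroup (Fin 2) ℂ)) := by
  have hconj (z : Circle) : X * diagUnitary z * X⁻¹ = diagUnitary z⁻¹ := by
    rw [mul_diagUnitary_eq_diagUnitary_inv_mul hX, mul_inv_cancel_right]
  refine Subgroup.mem_normalizer_iff.2 fun g => ⟨?_, ?_⟩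
  · rintro ⟨z, rfl⟩
    exact ⟨z⁻¹, (hconj z).symm⟩
  · rintro ⟨w, hw⟩
    exact ⟨w⁻¹, (MulAut.conj X).injective <| by
      rw [MulAut.conj_apply, MulAut.conj_apply, hconj, inv_inv, hw]⟩

theorem isClosed_zpowers_sup_range_diagUnitary :
    IsClosed ((Subgroup.zpowers X ⊔ diagUnitary.range : Subgroup (unitaryGroup (Fin 2) ℂ)) :
      Set (unitaryGroup (Fin 2) ℂ)) :=
  (Subgroup.isCompact_sup_of_le_normalizer
    (finite_zpowers.2 (isOfFinOrder_of_coe_eq hX)).isCompact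
    (isCompact_range continuous_diagUnitary)
    (Subgroup.zpowers_le.2 (mem_normalizer_range_diagUnitary hX))).isClosed

end

/-- Fix `θ ∈ ℝ` with `θ/π` irrational, and let `Dic∞` be the subgroup of the unitary group
`U(2,ℂ)` generated by `x = !![0,-1;1,0]` and `a = !![exp(iθ),0;0,exp(-iθ)]`.  Then the
topological closure of `Dic∞` in `U(2,ℂ)` equals the subgroup of `U(2,ℂ)` generated by `x`
together with all matrices `!![exp(it),0;0,exp(-it)]` for `t ∈ ℝ`. -/
theorem closure_dicyclicInf_unitary
    (θ : ℝ) (hθ : Irrational (θ / Real.pi))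
    (X A : Matrix.unitaryGroup (Fin 2) ℂ)
    (hX : (X : Matrix (Fin 2) (Fin 2) ℂ) = !![0, -1; 1, 0])
    (hA : (A : Matrix (Fin 2) (Fin 2) ℂ) =
      !![Complex.exp (θ * Complex.I), 0; 0, Complex.exp (-(θ * Complex.I))])
    (D : ℝ → Matrix.unitaryGroup (Fin 2) ℂ)
    (hD : ∀ t : ℝ, (D t : Matrix (Fin 2) (Fin 2) ℂ) =
      !![Complex.exp (t * Complex.I), 0; 0, Complex.exp (-(t * Complex.I))]) :
    closure ((Subgroup.closure {X, A} : Subgroup (Matrix.unitaryGroup (Fin 2) ℂ)) :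
        Set (Matrix.unitaryGroup (Fin 2) ℂ)) =
      ((Subgroup.closure ({X} ∪ Set.range D) : Subgroup (Matrix.unitaryGroup (Fin 2) ℂ)) :
        Set (Matrix.unitaryGroup (Fin 2) ℂ)) := by
  obtain rfl : D = diagUnitary ∘ Circle.exp := funext fun t => Subtype.ext <| by
    simp [hD, coe_diagUnitary, Circle.coe_exp, Complex.exp_neg]
  obtain rfl : A = diagUnitary (Circle.exp θ) := Subtype.ext <| by
    simp [hA, coe_diagUnitary, Circle.coe_exp, Complex.exp_neg]
  have hG : Subgroup.closure ({X} ∪ Set.range (diagUnitary ∘ Circle.exp)) =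
      Subgroup.zpowers X ⊔ diagUnitary.range := by
    rw [Set.range_comp, Circle.exp_surjective.range_eq, Set.image_univ, ← MonoidHom.coe_range,
      Subgroup.closure_union, ← Subgroup.zpowers_eq_closure, Subgroup.closure_eq]
  set H := Subgroup.closure {X, diagUnitary (Circle.exp θ)}
  have hX_mem : X ∈ H := Subgroup.subset_closure (Set.mem_insert X _)
  have hA_mem : diagUnitary (Circle.exp θ) ∈ H :=
    Subgroup.subset_closure (Set.mem_insert_of_mem _ rfl)
  have hrange : diagUnitary.range ≤ H.topologicalClosure := by
    rintro _ ⟨z, rfl⟩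
    refine closure_mono ?_ (continuous_diagUnitary.range_subset_closure_image_dense
      (Circle.dense_zpowers_exp hθ) ⟨z, rfl⟩)
    rw [← Subgroup.coe_map, MonoidHom.map_zpowers, SetLike.coe_subset_coe, Subgroup.zpowers_le]
    exact hA_mem
  rw [hG, ← Subgroup.topologicalClosure_coe]
  refine congrArg SetLike.coe (le_antisymm ?_ ?_)
  · refine H.topologicalClosure_minimal ?_ (isClosed_zpowers_sup_range_diagUnitary hX)
    rw [Subgroup.closure_le, Set.insert_subset_iff, Set.singleton_subset_iff]
    exact ⟨Subgroup.mem_sup_left (Subgroup.mem_zpowers X),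
      Subgroup.mem_sup_right ⟨Circle.exp θ, rfl⟩⟩
  · exact sup_le (Subgroup.zpowers_le.2 (H.le_topologicalClosure hX_mem)) hrange
end

section
/- The standard representation V = ℂ² of Dic∞ is simple (its only Dic∞-invariant subspaces are 0 and ℂ²) and self-dual (V is isomorphic to its dual representation as a Dic∞-representation). -/
/-!
The generator `a` is diagonal with eigenvalues `e^{±iθ}`, which differ because `θ/π` is not an
integer. Hence an invariant subspace containing a nonzero vector `v` contains the coordinate
vectors `e_i` with `v_i ≠ 0`, and `x` exchanges the two coordinate lines, so it is all of `ℂ²`.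
Both generators have determinant `1`, and `SL₂` preserves the nondegenerate symplectic form
`ω(v, w) = det [v w]`; an invariant nondegenerate form is an isomorphism `V ≃ V*` of
representations.
-/

open scoped TensorProduct
open Matrix

noncomputable section

/-- `ℂ²`, the standard two-dimensional complex vector space. -/
abbrev V2 : Type := Fin 2 → ℂ

/-- The standard representation of a subgroup `G ≤ GL₂(ℂ)` on `ℂ²`, by matrix-vector
multiplication. -/
def stdRep (G : Subgroup (GL (Fin 2) ℂ)) : Representation ℂ G V2 where
  toFun g := Matrix.toLin' ((g : GL (Fin 2) ℂ) : Matrix (Fin 2) (Fin 2) ℂ)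
  map_one' := by
    simp only [OneMemClass.coe_one, Units.val_one, Matrix.toLin'_one]
    rfl
  map_mul' g h := by
    simp only [MulMemClass.coe_mul, Units.val_mul, Matrix.toLin'_mul]
    rfl

lemma stdRep_apply (G : Subgroup (GL (Fin 2) ℂ)) (g : G) (v : V2) :
    stdRep G g v = ((g : GL (Fin 2) ℂ) : Matrix (Fin 2) (Fin 2) ℂ) *ᵥ v :=
  toLin'_apply _ _

theorem Complex.exp_mul_I_ne_exp_neg_mul_I {θ : ℝ} (hθ : Irrational (θ / Real.pi)) :
    exp (θ * I) ≠ exp (-(θ * I)) := by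
  intro h
  obtain ⟨n, hn⟩ := exp_eq_exp_iff_exists_int.1 h
  have hθn : (θ : ℂ) = n * Real.pi := by
    linear_combination (-I / 2) * hn + (θ - n * Real.pi) * I_sq
  apply hθ.ne_int n
  rw [show θ = n * Real.pi by exact_mod_cast hθn, mul_div_cancel_right₀ _ Real.pi_ne_zero]

theorem Matrix.GeneralLinearGroup.det_eq_one_of_mem_closure {n R : Type*} [Fintype n]
    [DecidableEq n] [CommRing R] {S : Set (GL n R)}
    (hS : ∀ s ∈ S, (s : Matrix n n R).det = 1) {g : GL n R} (hg : g ∈ Subgroup.closure S) :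
    (g : Matrix n n R).det = 1 := by
  have hle : Subgroup.closure S ≤ (GeneralLinearGroup.det (n := n) (R := R)).ker :=
    (Subgroup.closure_le _).2 fun s hs => by simpa [Units.ext_iff] using hS s hs
  simpa [Units.ext_iff] using hle hg

namespace Submodule

variable {K : Type*} [Field K] {p : Submodule K (Fin 2 → K)}

theorem single_mem_of_diagonal_invariant {a b : K} (hab : a ≠ b)
    (hp : ∀ v ∈ p, !![a, 0; 0, b] *ᵥ v ∈ p) {v : Fin 2 → K} (hv : v ∈ p) (i : Fin 2) :
    Pi.single i (v i) ∈ p := by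
  have hab' : a - b ≠ 0 := sub_ne_zero.2 hab
  have hba : b - a ≠ 0 := sub_ne_zero.2 hab.symm
  -- For `D = diag(a, b)`, `(D - b) / (a - b)` and `(D - a) / (b - a)` project onto the axes.
  fin_cases i
  · convert p.smul_mem (a - b)⁻¹ (p.sub_mem (hp v hv) (p.smul_mem b hv)) using 1
    ext j; fin_cases j <;> simp [vecHead, vecTail, ← sub_mul, hab']
  · convert p.smul_mem (b - a)⁻¹ (p.sub_mem (hp v hv) (p.smul_mem a hv)) using 1
    ext j; fin_cases j <;> simp [vecHead, vecTail, ← sub_mul, hba]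

theorem eq_top_of_single_one_mem (hp : ∀ v ∈ p, !![0, -1; 1, 0] *ᵥ v ∈ p) {i : Fin 2}
    (hi : Pi.single i 1 ∈ p) : p = ⊤ := by
  have hX₀ : !![0, -1; 1, 0] *ᵥ (Pi.single 0 1 : Fin 2 → K) = Pi.single 1 1 := by
    ext j; fin_cases j <;> simp
  have hX₁ : !![0, -1; 1, 0] *ᵥ (Pi.single 1 1 : Fin 2 → K) = -Pi.single 0 1 := by
    ext j; fin_cases j <;> simp
  have h₀₁ : (Pi.single 0 1 : Fin 2 → K) ∈ p ∧ (Pi.single 1 1 : Fin 2 → K) ∈ p := by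
    fin_cases i
    · exact ⟨hi, hX₀ ▸ hp _ hi⟩
    · exact ⟨neg_neg (Pi.single 0 1 : Fin 2 → K) ▸ p.neg_mem (hX₁ ▸ hp _ hi), hi⟩
  rw [eq_top_iff, ← (Pi.basisFun K (Fin 2)).span_eq, span_le, Set.range_subset_iff]
  intro k
  fin_cases k <;> simp [h₀₁]

theorem eq_bot_or_eq_top_of_invariant {a b : K} (hab : a ≠ b)
    (hD : ∀ v ∈ p, !![a, 0; 0, b] *ᵥ v ∈ p) (hX : ∀ v ∈ p, !![0, -1; 1, 0] *ᵥ v ∈ p) :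
    p = ⊥ ∨ p = ⊤ := by
  refine or_iff_not_imp_left.2 fun hne => ?_
  obtain ⟨v, hv, hv0⟩ := exists_mem_ne_zero_of_ne_bot hne
  obtain ⟨i, hi⟩ := Function.ne_iff.1 hv0
  refine eq_top_of_single_one_mem hX (i := i) ?_
  simpa [← Pi.single_smul', inv_mul_cancel₀ hi] using
    p.smul_mem (v i)⁻¹ (single_mem_of_diagonal_invariant hab hD hv i)

end Submodule

theorem Matrix.transpose_mul_symplectic_mul_fin_two {R : Type*} [CommRing R]
    (M : Matrix (Fin 2) (Fin 2) R) :
    Mᵀ * !![0, 1; -1, 0] * M = M.det • !![0, 1; -1, 0] := by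
  ext i j; fin_cases i <;> fin_cases j <;> simp [det_fin_two, mul_apply] <;> ring

/-- `symplecticForm R v w = v 0 * w 1 - v 1 * w 0`, the determinant of the matrix with columns
`v` and `w`. -/
def symplecticForm (R : Type*) [CommRing R] : LinearMap.BilinForm R (Fin 2 → R) :=
  toBilin' !![0, 1; -1, 0]

theorem symplecticForm_nondegenerate (R : Type*) [CommRing R] [IsDomain R] :
    (symplecticForm R).Nondegenerate :=
  LinearMap.BilinForm.nondegenerate_toBilin'_of_det_ne_zero' _ (by simp [det_fin_two_of])

theorem symplecticForm_mulVec_mulVec {R : Type*} [CommRing R] {M : Matrix (Fin 2) (Fin 2) R}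
    (hM : M.det = 1) (v w : Fin 2 → R) :
    symplecticForm R (M *ᵥ v) (M *ᵥ w) = symplecticForm R v w := by
  rw [symplecticForm, ← toLin'_apply, ← toLin'_apply, ← LinearMap.BilinForm.comp_apply,
    toBilin'_comp, transpose_mul_symplectic_mul_fin_two, hM, one_smul]

theorem LinearMap.BilinForm.toDual_equivariant {k G V : Type*} [Field k] [Group G]
    [AddCommGroup V] [Module k V] [FiniteDimensional k V] {ρ : Representation k G V}
    {B : LinearMap.BilinForm k V} (hB : B.Nondegenerate)
    (hρ : ∀ g v w, B (ρ g v) (ρ g w) = B v w) (g : G) (v : V) :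
    B.toDual hB (ρ g v) = ρ.dual g (B.toDual hB v) := by
  ext w
  rw [Representation.dual_apply, Module.Dual.transpose_apply, LinearMap.comp_apply,
    toDual_def, toDual_def, ← hρ g v, Representation.self_inv_apply]

/-- The standard representation `V = ℂ²` of the infinite dicyclic group `Dic∞` is simple
(its only invariant subspaces are `0` and `ℂ²`) and self-dual (`V` is isomorphic to its dual
representation as a `Dic∞`-representation). -/
theorem stdRep_dicyclicInf_simple_and_selfDual
    (θ : ℝ) (hθ : Irrational (θ / Real.pi)) (X A : GL (Fin 2) ℂ)
    (hX : (X : Matrix (Fin 2) (Fin 2) ℂ) = !![0, -1; 1, 0])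
    (hA : (A : Matrix (Fin 2) (Fin 2) ℂ) =
      !![Complex.exp (θ * Complex.I), 0; 0, Complex.exp (-(θ * Complex.I))])
    (G : Subgroup (GL (Fin 2) ℂ)) (hG : G = Subgroup.closure {X, A}) :
    (∀ p : Submodule ℂ V2,
        (∀ (g : G) (v : V2), v ∈ p → stdRep G g v ∈ p) → p = ⊥ ∨ p = ⊤) ∧
    ∃ f : V2 ≃ₗ[ℂ] Module.Dual ℂ V2,
      ∀ (g : G) (v : V2), f (stdRep G g v) = (stdRep G).dual g (f v) := by
  subst hG
  refine ⟨fun p hp => ?_, ?_⟩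
  · have hXG : X ∈ Subgroup.closure {X, A} := Subgroup.subset_closure (by simp)
    have hAG : A ∈ Subgroup.closure {X, A} := Subgroup.subset_closure (by simp)
    refine p.eq_bot_or_eq_top_of_invariant (Complex.exp_mul_I_ne_exp_neg_mul_I hθ)
      (fun v hv => ?_) (fun v hv => ?_)
    · simpa only [stdRep_apply, hA] using hp ⟨A, hAG⟩ v hv
    · simpa only [stdRep_apply, hX] using hp ⟨X, hXG⟩ v hv
  · have hdet : ∀ g ∈ ({X, A} : Set (GL (Fin 2) ℂ)), (g : Matrix (Fin 2) (Fin 2) ℂ).det = 1 := by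
      rintro g (rfl | rfl)
      · simp [hX, det_fin_two_of]
      · simp [hA, det_fin_two_of, ← Complex.exp_add]
    refine ⟨_, LinearMap.BilinForm.toDual_equivariant (symplecticForm_nondegenerate ℂ)
      fun g v w => ?_⟩
    rw [stdRep_apply, stdRep_apply]
    exact symplecticForm_mulVec_mulVec
      (Matrix.GeneralLinearGroup.det_eq_one_of_mem_closure hdet g.2) v w
end
end

section
/- For every k ≥ 1, the subspace V_k of V^{⊗k} is a simple two-dimensional Dic∞-subrepresentation, and for i ≠ j (i,j ≥ 1) the representations V_i and V_j are not isomorphic as Dic∞-representations. -/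
open scoped TensorProduct
open Matrix

noncomputable section

/-- `TPow j` is the `(j+1)`-st tensor power `V^{⊗(j+1)}` of `V = ℂ²`, realized as an
iterated binary tensor product (bundled as an object of `ModuleCat ℂ` so that the
recursion carries its module structure). -/
def TPow : ℕ → ModuleCat ℂ
  | 0 => ModuleCat.of ℂ V2
  | (j + 1) => ModuleCat.of ℂ (TPow j ⊗[ℂ] V2)

/-- The diagonal representation of `G ≤ GL₂(ℂ)` on `TPow j = V^{⊗(j+1)}`. -/
def TPowRep (G : Subgroup (GL (Fin 2) ℂ)) : (j : ℕ) → Representation ℂ G (TPow j)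
  | 0 => stdRep G
  | (j + 1) => (TPowRep G j).tprod (stdRep G)

/-- The basis vector `v_s^{⊗(j+1)}` of `TPow j = V^{⊗(j+1)}`, for `s : Fin 2`. -/
def vpow (s : Fin 2) : (j : ℕ) → TPow j
  | 0 => Pi.single s 1
  | (j + 1) => vpow s j ⊗ₜ[ℂ] Pi.single s 1

/-- The subspace `V_{j+1}` of `V^{⊗(j+1)}` spanned by `v₁^{⊗(j+1)}` and `v₂^{⊗(j+1)}`. -/
def Vsub (j : ℕ) : Submodule ℂ (TPow j) := Submodule.span ℂ {vpow 0 j, vpow 1 j}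

/-!
Both generators act monomially in the basis `v₁, v₂`, so each sends `v_s^{⊗k}` to a multiple of
some `v_t^{⊗k}`. Hence `V_k` is stable under the generators and, being finite-dimensional, under
the group they generate. On `V_k` the element `a` is diagonal with eigenvalues `λ^k` and `λ^{-k}`,
where `λ = e^{iθ}` is not a root of unity because `θ/π` is irrational. These eigenvalues are
distinct, so a nonzero `a`-stable subspace of `V_k` contains `v₁^{⊗k}` or `v₂^{⊗k}`, and `x`
swaps the two lines. An isomorphism `V_m ≅ V_n` would make `λ^m` an eigenvalue of `a` on `V_n`,
i.e. `λ^m = λ^{±n}`, which forces `m = n`.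
-/

section EigenvectorPair

variable {K M : Type*} [Field K] [AddCommGroup M] [Module K M] {f : M →ₗ[K] M}
  {u₀ u₁ : M} {α β : K}

theorem mem_or_mem_of_le_span_pair_of_mapsTo (hαβ : α ≠ β) (h₀ : f u₀ = α • u₀)
    (h₁ : f u₁ = β • u₁) {q : Submodule K M} (hq : q ≤ Submodule.span K {u₀, u₁})
    (hfq : ∀ v ∈ q, f v ∈ q) (hq0 : q ≠ ⊥) : u₀ ∈ q ∨ u₁ ∈ q := by
  obtain ⟨v, hvq, hv0⟩ := Submodule.exists_mem_ne_zero_of_ne_bot hq0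
  obtain ⟨a, b, rfl⟩ := Submodule.mem_span_pair.mp (hq hvq)
  by_cases ha : a = 0
  · subst ha
    have hb : b ≠ 0 := by rintro rfl; simp at hv0
    rw [zero_smul, zero_add] at hvq
    exact Or.inr ((Submodule.smul_mem_iff q hb).mp hvq)
  · have hproj : f (a • u₀ + b • u₁) - β • (a • u₀ + b • u₁) = (a * (α - β)) • u₀ := by
      rw [map_add, map_smul, map_smul, h₀, h₁]
      module
    have hmem := q.sub_mem (hfq _ hvq) (q.smul_mem β hvq)
    rw [hproj] at hmem
    exact Or.inl ((Submodule.smul_mem_iff q (mul_ne_zero ha (sub_ne_zero.mpr hαβ))).mp hmem)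

theorem eq_or_eq_of_mem_span_pair_of_apply_eq_smul (hli : LinearIndependent K ![u₀, u₁])
    (h₀ : f u₀ = α • u₀) (h₁ : f u₁ = β • u₁) {y : M} (hy : y ∈ Submodule.span K {u₀, u₁})
    (hy0 : y ≠ 0) {μ : K} (hfy : f y = μ • y) : μ = α ∨ μ = β := by
  obtain ⟨a, b, rfl⟩ := Submodule.mem_span_pair.mp hy
  have hcoef : (a * (α - μ)) • u₀ + (b * (β - μ)) • u₁ = 0 := by
    rw [map_add, map_smul, map_smul, h₀, h₁, ← sub_eq_zero] at hfy
    rw [← hfy]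
    module
  obtain ⟨ha, hb⟩ := LinearIndependent.pair_iff.mp hli _ _ hcoef
  by_contra! hμ
  rw [mul_eq_zero, sub_eq_zero] at ha hb
  rw [ha.resolve_right hμ.1.symm, hb.resolve_right hμ.2.symm, zero_smul, zero_smul,
    add_zero] at hy0
  exact hy0 rfl

end EigenvectorPair

namespace Representation

variable {k G V : Type*} [Field k] [Group G] [AddCommGroup V] [Module k V]
  (ρ : Representation k G V)

def submoduleStabilizer (p : Submodule k V) : Subgroup G where
  carrier := {g | p.map (ρ g) = p}
  one_mem' := by
    change p.map (ρ 1) = p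
    rw [map_one, Module.End.one_eq_id, Submodule.map_id]
  mul_mem' {g h} (hg : p.map (ρ g) = p) (hh : p.map (ρ h) = p) := by
    change p.map (ρ (g * h)) = p
    rw [map_mul, Module.End.mul_eq_comp, Submodule.map_comp, hh, hg]
  inv_mem' {g} (hg : p.map (ρ g) = p) := by
    change p.map (ρ g⁻¹) = p
    conv_lhs => rw [← hg, ← Submodule.map_comp, ← Module.End.mul_eq_comp, ← map_mul,
      inv_mul_cancel, map_one, Module.End.one_eq_id, Submodule.map_id]

theorem map_eq_self_of_mapsTo {p : Submodule k V} [FiniteDimensional k p] {g : G}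
    (h : ∀ v ∈ p, ρ g v ∈ p) : p.map (ρ g) = p :=
  Submodule.eq_of_le_of_finrank_eq (Submodule.map_le_iff_le_comap.mpr h)
    (Submodule.equivMapOfInjective _ (ρ.apply_bijective g).injective p).finrank_eq.symm

theorem apply_mem_of_closure_eq_top {S : Set G} (hS : Subgroup.closure S = ⊤)
    {p : Submodule k V} [FiniteDimensional k p] (h : ∀ g ∈ S, ∀ v ∈ p, ρ g v ∈ p) (g : G)
    {v : V} (hv : v ∈ p) : ρ g v ∈ p := by
  have hle : Subgroup.closure S ≤ ρ.submoduleStabilizer p :=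
    (Subgroup.closure_le _).mpr fun s hs => ρ.map_eq_self_of_mapsTo (h s hs)
  have hg : p.map (ρ g) = p := hle (hS ▸ Subgroup.mem_top g)
  exact hg ▸ Submodule.mem_map_of_mem hv

end Representation

def coordProd : (j : ℕ) → TPow j →ₗ[ℂ] V2
  | 0 => LinearMap.id
  | (j + 1) => TensorProduct.lift ((LinearMap.mul ℂ V2).comp (coordProd j))

theorem coordProd_vpow (s : Fin 2) : ∀ j, coordProd j (vpow s j) = Pi.single s 1
  | 0 => rfl
  | (j + 1) => by
    change TensorProduct.lift _ (vpow s j ⊗ₜ[ℂ] Pi.single s 1) = _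
    rw [TensorProduct.lift.tmul, LinearMap.comp_apply, coordProd_vpow s j,
      LinearMap.mul_apply', ← Pi.single_mul_left, Pi.single_eq_same, mul_one]

theorem linearIndependent_vpow (j : ℕ) : LinearIndependent ℂ ![vpow 0 j, vpow 1 j] := by
  refine LinearIndependent.of_comp (coordProd j) ?_
  have hcomp : coordProd j ∘ ![vpow 0 j, vpow 1 j] = fun s : Fin 2 => Pi.single s 1 := by
    ext s : 1
    fin_cases s <;> simp [coordProd_vpow]
  rw [hcomp]
  exact Pi.linearIndependent_single_one (Fin 2) ℂ

theorem finrank_Vsub (j : ℕ) : Module.finrank ℂ (Vsub j) = 2 := by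
  have h := finrank_span_eq_card (linearIndependent_vpow j)
  rwa [Matrix.range_cons, Matrix.range_cons, Matrix.range_empty, Set.union_empty,
    Set.singleton_union, Fintype.card_fin] at h

instance (j : ℕ) : FiniteDimensional ℂ (Vsub j) :=
  FiniteDimensional.span_of_finite ℂ ((Set.finite_singleton _).insert _)

theorem vpow_zero_mem_Vsub (j : ℕ) : vpow 0 j ∈ Vsub j :=
  Submodule.subset_span (Set.mem_insert _ _)

theorem vpow_one_mem_Vsub (j : ℕ) : vpow 1 j ∈ Vsub j :=
  Submodule.subset_span (Set.mem_insert_of_mem _ rfl)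

theorem Vsub_le_iff {j : ℕ} {q : Submodule ℂ (TPow j)} :
    Vsub j ≤ q ↔ vpow 0 j ∈ q ∧ vpow 1 j ∈ q := by
  rw [Vsub, Submodule.span_le, Set.insert_subset_iff, Set.singleton_subset_iff]
  rfl

section Action

variable {G : Subgroup (GL (Fin 2) ℂ)}

theorem stdRep_single (g : G) (s : Fin 2) :
    stdRep G g (Pi.single s 1) = fun i => ((g : GL (Fin 2) ℂ) : Matrix (Fin 2) (Fin 2) ℂ) i s :=
  (Matrix.toLin'_apply _ _).trans (Matrix.mulVec_single_one _ _)

theorem TPowRep_vpow_of_stdRep (g : G) {s t : Fin 2} {c : ℂ}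
    (h : stdRep G g (Pi.single s 1) = c • Pi.single t 1) :
    ∀ j, TPowRep G j g (vpow s j) = c ^ (j + 1) • vpow t j
  | 0 => by rw [zero_add, pow_one]; exact h
  | (j + 1) => by
    change (TPowRep G j).tprod (stdRep G) g (vpow s j ⊗ₜ[ℂ] Pi.single s 1) =
      c ^ (j + 2) • (vpow t j ⊗ₜ[ℂ] Pi.single t 1)
    rw [Representation.tprod_apply, TensorProduct.map_tmul, TPowRep_vpow_of_stdRep g h j, h,
      TensorProduct.smul_tmul_smul, ← pow_succ]

theorem TPowRep_vpow_of_eq_swap (g : G)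
    (hg : ((g : GL (Fin 2) ℂ) : Matrix (Fin 2) (Fin 2) ℂ) = !![0, -1; 1, 0]) (j : ℕ) :
    TPowRep G j g (vpow 0 j) = vpow 1 j ∧
      TPowRep G j g (vpow 1 j) = (-1 : ℂ) ^ (j + 1) • vpow 0 j := by
  constructor
  · simpa using TPowRep_vpow_of_stdRep g (c := 1) (t := 1) (by
      ext i; fin_cases i <;> simp [stdRep_single, hg]) j
  · exact TPowRep_vpow_of_stdRep g (s := 1) (t := 0)
      (by ext i; fin_cases i <;> simp [stdRep_single, hg]) j

theorem TPowRep_vpow_of_eq_diagonal (g : G) {a b : ℂ}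
    (hg : ((g : GL (Fin 2) ℂ) : Matrix (Fin 2) (Fin 2) ℂ) = !![a, 0; 0, b]) (j : ℕ) :
    TPowRep G j g (vpow 0 j) = a ^ (j + 1) • vpow 0 j ∧
      TPowRep G j g (vpow 1 j) = b ^ (j + 1) • vpow 1 j :=
  ⟨TPowRep_vpow_of_stdRep g (s := 0) (by ext i; fin_cases i <;> simp [stdRep_single, hg]) j,
    TPowRep_vpow_of_stdRep g (s := 1) (by ext i; fin_cases i <;> simp [stdRep_single, hg]) j⟩

theorem TPowRep_mem_Vsub {j : ℕ} {g : G} (h₀ : TPowRep G j g (vpow 0 j) ∈ Vsub j)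
    (h₁ : TPowRep G j g (vpow 1 j) ∈ Vsub j) {v : TPow j} (hv : v ∈ Vsub j) :
    TPowRep G j g v ∈ Vsub j :=
  (Vsub_le_iff (q := (Vsub j).comap (TPowRep G j g))).mpr ⟨h₀, h₁⟩ hv

theorem TPowRep_mem_Vsub_of_eq_swap (g : G)
    (hg : ((g : GL (Fin 2) ℂ) : Matrix (Fin 2) (Fin 2) ℂ) = !![0, -1; 1, 0]) {j : ℕ}
    {v : TPow j} (hv : v ∈ Vsub j) : TPowRep G j g v ∈ Vsub j :=
  have h := TPowRep_vpow_of_eq_swap g hg j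
  TPowRep_mem_Vsub (h.1 ▸ vpow_one_mem_Vsub j)
    (h.2 ▸ Submodule.smul_mem _ _ (vpow_zero_mem_Vsub j)) hv

theorem TPowRep_mem_Vsub_of_eq_diagonal (g : G) {α β : ℂ}
    (hg : ((g : GL (Fin 2) ℂ) : Matrix (Fin 2) (Fin 2) ℂ) = !![α, 0; 0, β]) {j : ℕ}
    {v : TPow j} (hv : v ∈ Vsub j) : TPowRep G j g v ∈ Vsub j :=
  have h := TPowRep_vpow_of_eq_diagonal g hg j
  TPowRep_mem_Vsub (h.1 ▸ Submodule.smul_mem _ _ (vpow_zero_mem_Vsub j))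
    (h.2 ▸ Submodule.smul_mem _ _ (vpow_one_mem_Vsub j)) hv

theorem eq_Vsub_of_le {j : ℕ} (x a : G) {α β : ℂ}
    (hx : ((x : GL (Fin 2) ℂ) : Matrix (Fin 2) (Fin 2) ℂ) = !![0, -1; 1, 0])
    (ha : ((a : GL (Fin 2) ℂ) : Matrix (Fin 2) (Fin 2) ℂ) = !![α, 0; 0, β])
    (hαβ : α ^ (j + 1) ≠ β ^ (j + 1)) {q : Submodule ℂ (TPow j)} (hq : q ≤ Vsub j)
    (hq0 : q ≠ ⊥) (hqx : ∀ v ∈ q, TPowRep G j x v ∈ q) (hqa : ∀ v ∈ q, TPowRep G j a v ∈ q) :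
    q = Vsub j := by
  obtain ⟨hx₀, hx₁⟩ := TPowRep_vpow_of_eq_swap x hx j
  obtain ⟨ha₀, ha₁⟩ := TPowRep_vpow_of_eq_diagonal a ha j
  refine le_antisymm hq (Vsub_le_iff.mpr ?_)
  rcases mem_or_mem_of_le_span_pair_of_mapsTo hαβ ha₀ ha₁ hq hqa hq0 with h₀ | h₁
  · exact ⟨h₀, hx₀ ▸ hqx _ h₀⟩
  · have hc : (-1 : ℂ) ^ (j + 1) ≠ 0 := pow_ne_zero _ (neg_ne_zero.mpr one_ne_zero)
    exact ⟨(Submodule.smul_mem_iff q hc).mp (hx₁ ▸ hqx _ h₁), h₁⟩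

theorem eq_or_eq_of_TPowRep_eq_smul {j : ℕ} (a : G) {α β : ℂ}
    (ha : ((a : GL (Fin 2) ℂ) : Matrix (Fin 2) (Fin 2) ℂ) = !![α, 0; 0, β]) {y : TPow j}
    (hy : y ∈ Vsub j) (hy0 : y ≠ 0) {μ : ℂ} (hay : TPowRep G j a y = μ • y) :
    μ = α ^ (j + 1) ∨ μ = β ^ (j + 1) :=
  eq_or_eq_of_mem_span_pair_of_apply_eq_smul (linearIndependent_vpow j)
    (TPowRep_vpow_of_eq_diagonal a ha j).1 (TPowRep_vpow_of_eq_diagonal a ha j).2 hy hy0 hay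

theorem eq_or_eq_of_intertwines_Vsub {i j : ℕ} (a : G) {α β : ℂ}
    (ha : ((a : GL (Fin 2) ℂ) : Matrix (Fin 2) (Fin 2) ℂ) = !![α, 0; 0, β])
    (f : Vsub i ≃ₗ[ℂ] Vsub j)
    (hf : ∀ w w' : Vsub i, TPowRep G i a w = w' → TPowRep G j a (f w) = f w') :
    α ^ (i + 1) = α ^ (j + 1) ∨ α ^ (i + 1) = β ^ (j + 1) := by
  let u : Vsub i := ⟨vpow 0 i, vpow_zero_mem_Vsub i⟩
  have hau : TPowRep G i a u = (α ^ (i + 1) • u :) := (TPowRep_vpow_of_eq_diagonal a ha i).1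
  have hfu : (f u : TPow j) ≠ 0 := by
    rw [ne_eq, Submodule.coe_eq_zero, LinearEquiv.map_eq_zero_iff, ← Submodule.coe_eq_zero]
    exact (linearIndependent_vpow i).ne_zero 0
  exact eq_or_eq_of_TPowRep_eq_smul a ha (f u).2 hfu (by simpa using hf u _ hau)

end Action

section IrrationalRotation

open Complex

variable {θ : ℝ}

theorem exp_mul_I_zpow_injective (hθ : Irrational (θ / Real.pi)) :
    Function.Injective fun n : ℤ => exp (θ * I) ^ n := by
  intro m n hmn
  simp only [← exp_int_mul, exp_eq_exp_iff_exists_int] at hmn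
  obtain ⟨l, hl⟩ := hmn
  have hre : (m : ℝ) * θ = n * θ + l * (2 * Real.pi) := by
    simpa using congrArg Complex.im hl
  by_contra hne
  have hne' : (m : ℝ) - n ≠ 0 := sub_ne_zero.mpr (by exact_mod_cast hne)
  refine hθ ⟨2 * l / (m - n), ?_⟩
  push_cast
  field_simp
  linarith

theorem exp_mul_I_pow_injective (hθ : Irrational (θ / Real.pi)) :
    Function.Injective fun n : ℕ => exp (θ * I) ^ n := fun m n hmn =>
  Int.natCast_inj.mp (exp_mul_I_zpow_injective hθ (by simpa only [zpow_natCast] using hmn))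

theorem add_eq_zero_of_exp_mul_I_pow_eq_exp_neg_pow (hθ : Irrational (θ / Real.pi)) {m n : ℕ}
    (h : exp (θ * I) ^ m = exp (-(θ * I)) ^ n) : m + n = 0 := by
  have hz : exp (θ * I) ^ (m : ℤ) = exp (θ * I) ^ (-(n : ℤ)) := by
    rwa [zpow_natCast, _root_.zpow_neg, zpow_natCast, ← inv_pow, ← exp_neg]
  have := exp_mul_I_zpow_injective hθ hz
  omega

end IrrationalRotation

/-- For every `k ≥ 1`, the subspace `V_k` of `V^{⊗k}` (spanned by `v₁^{⊗k}, v₂^{⊗k}`) is a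
simple two-dimensional `Dic∞`-subrepresentation, and for `i ≠ j` (with `i, j ≥ 1`) the
representations `V_i` and `V_j` are not isomorphic as `Dic∞`-representations. -/
theorem Vsub_simple_two_dimensional_pairwise_nonIso
    (θ : ℝ) (hθ : Irrational (θ / Real.pi)) (X A : GL (Fin 2) ℂ)
    (hX : (X : Matrix (Fin 2) (Fin 2) ℂ) = !![0, -1; 1, 0])
    (hA : (A : Matrix (Fin 2) (Fin 2) ℂ) =
      !![Complex.exp (θ * Complex.I), 0; 0, Complex.exp (-(θ * Complex.I))])
    (G : Subgroup (GL (Fin 2) ℂ)) (hG : G = Subgroup.closure {X, A}) :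
    (∀ k : ℕ, 1 ≤ k →
      -- `V_k` is a subrepresentation:
      (∀ (g : G) (v : TPow (k - 1)), v ∈ Vsub (k - 1) →
        TPowRep G (k - 1) g v ∈ Vsub (k - 1)) ∧
      -- `V_k` is two-dimensional:
      Module.finrank ℂ (Vsub (k - 1)) = 2 ∧
      -- `V_k` is simple: every invariant subspace contained in it is `0` or all of it:
      (∀ q : Submodule ℂ (TPow (k - 1)), q ≤ Vsub (k - 1) →
        (∀ (g : G) (v : TPow (k - 1)), v ∈ q → TPowRep G (k - 1) g v ∈ q) →
        q = ⊥ ∨ q = Vsub (k - 1))) ∧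
    -- for `i ≠ j`, `V_i` and `V_j` are not isomorphic as `Dic∞`-representations:
    (∀ i j : ℕ, 1 ≤ i → 1 ≤ j → i ≠ j →
      ¬ ∃ f : (Vsub (i - 1)) ≃ₗ[ℂ] (Vsub (j - 1)),
        ∀ (g : G) (w w' : Vsub (i - 1)),
          TPowRep G (i - 1) g (w : TPow (i - 1)) = (w' : TPow (i - 1)) →
          TPowRep G (j - 1) g (f w : TPow (j - 1)) = (f w' : TPow (j - 1))) := by
  subst hG
  let x : Subgroup.closure {X, A} := ⟨X, Subgroup.subset_closure (Set.mem_insert _ _)⟩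
  let a : Subgroup.closure {X, A} := ⟨A, Subgroup.subset_closure (Set.mem_insert_of_mem _ rfl)⟩
  have hgen : ∀ j, ∀ g ∈ ((↑) : Subgroup.closure {X, A} → _) ⁻¹' {X, A},
      ∀ v ∈ Vsub j, TPowRep _ j g v ∈ Vsub j := by
    rintro j g (hg | hg) v
    · exact TPowRep_mem_Vsub_of_eq_swap g (by rw [hg, hX])
    · exact TPowRep_mem_Vsub_of_eq_diagonal g (by rw [hg, hA])
  refine ⟨fun k _ => ⟨fun g v hv => ?_, finrank_Vsub _, fun q hq hqG => ?_⟩, ?_⟩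
  · exact (TPowRep _ (k - 1)).apply_mem_of_closure_eq_top
      Subgroup.closure_closure_coe_preimage (hgen (k - 1)) g hv
  · refine (eq_or_ne q ⊥).imp_right fun hq0 =>
      eq_Vsub_of_le x a hX hA (fun h => ?_) hq hq0 (hqG x) (hqG a)
    have := add_eq_zero_of_exp_mul_I_pow_eq_exp_neg_pow hθ h
    omega
  rintro i j hi hj hij ⟨f, hf⟩
  rcases eq_or_eq_of_intertwines_Vsub a hA f (hf a) with h | h
  · exact hij (by have := exp_mul_I_pow_injective hθ h; omega)
  · have := add_eq_zero_of_exp_mul_I_pow_eq_exp_neg_pow hθ h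
    omega
end
end

section
/- For every integer k ≥ 1, the endomorphism algebra of the k-th tensor power of the standard representation of the infinite dicyclic group satisfies dim_ℂ End_{Dic∞}(V^{⊗k}) = (1/2)·binomial(2k,k). -/
open scoped TensorProduct
open Matrix

noncomputable section

/-- The space `End_G(W)` of `G`-equivariant linear endomorphisms of a representation `W`. -/
def equivEnd {G W : Type*} [Group G] [AddCommGroup W] [Module ℂ W]
    (ρ : Representation ℂ G W) : Submodule ℂ (W →ₗ[ℂ] W) where
  carrier := {f | ∀ g : G, f ∘ₗ ρ g = ρ g ∘ₗ f}
  add_mem' := by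
    intro f h hf hh g
    simp only [LinearMap.add_comp, LinearMap.comp_add, hf g, hh g]
  zero_mem' := by
    intro g
    simp only [LinearMap.zero_comp, LinearMap.comp_zero]
  smul_mem' := by
    intro c f hf g
    simp only [LinearMap.smul_comp, LinearMap.comp_smul, hf g]

/-!
In the basis of words `e_S = e_{S 0} ⊗ ⋯ ⊗ e_{S (k-1)}`, the generator `a` is diagonal with
eigenvalue `exp(iθ (k - 2 |S|))`, where `|S|` is the number of letters `1`; since `θ/π` is
irrational, these agree exactly when the weights agree, so an equivariant endomorphism has its
matrix supported on pairs of words of equal weight. The generator `x` maps `e_S` to `±e_{rev S}`,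
so commuting with it forces `M (rev S) (rev T) = ±M S T`. As `(S, T) ↦ (rev S, rev T)` is a
fixed-point-free involution of the `binom(2k, k)` pairs of equal weight, the dimension is half
that number.
-/

open Function Finset

section Twisted

variable {K ι : Type*} [Field K]

def twistedSubspace (σ : ι → ι) (c : ι → K) (E : Set ι) : Submodule K (ι → K) where
  carrier := {v | (∀ x ∉ E, v x = 0) ∧ ∀ x, v (σ x) = c x * v x}
  add_mem' := by
    rintro v w ⟨hv₀, hv⟩ ⟨hw₀, hw⟩
    exact ⟨fun x hx => by simp [hv₀ x hx, hw₀ x hx], fun x => by simp [hv x, hw x, mul_add]⟩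
  zero_mem' := ⟨fun _ _ => rfl, fun _ => by simp⟩
  smul_mem' := by
    rintro a v ⟨hv₀, hv⟩
    exact ⟨fun x hx => by simp [hv₀ x hx], fun x => by simp [hv x, mul_left_comm]⟩

variable {σ : ι → ι} {c : ι → K} {E D : Set ι}

theorem mem_twistedSubspace {v : ι → K} :
    v ∈ twistedSubspace σ c E ↔ (∀ x ∉ E, v x = 0) ∧ ∀ x, v (σ x) = c x * v x :=
  Iff.rfl

def twistedSubspaceRestrictEquiv (hσ : Involutive σ) (hc : ∀ x, c (σ x) * c x = 1)
    (hE : ∀ x, σ x ∈ E ↔ x ∈ E) (hD : ∀ x, σ x ∈ D ↔ x ∉ D) :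
    twistedSubspace σ c E ≃ₗ[K] (↥(E ∩ D) → K) := by
  classical
  refine LinearEquiv.ofBijective
    ((LinearMap.funLeft K K ((↑) : ↥(E ∩ D) → ι)).comp (twistedSubspace σ c E).subtype)
    ⟨?_, fun f => ?_⟩
  · refine (injective_iff_map_eq_zero _).2 fun ⟨v, hv₀, hv⟩ h =>
      Subtype.ext (funext fun x => ?_)
    have hzero : ∀ y ∈ E ∩ D, v y = 0 := fun y hy => congrFun h ⟨y, hy⟩
    by_cases hxE : x ∈ E
    · by_cases hxD : x ∈ D
      · exact hzero x ⟨hxE, hxD⟩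
      · change v x = 0
        rw [← hσ x, hv, hzero (σ x) ⟨(hE x).2 hxE, (hD x).2 hxD⟩, mul_zero]
    · exact hv₀ x hxE
  · let v : ι → K := fun x =>
      if h : x ∈ E ∩ D then f ⟨x, h⟩
      else if h' : σ x ∈ E ∩ D then c (σ x) * f ⟨σ x, h'⟩ else 0
    refine ⟨⟨v, fun x hx => ?_, fun x => ?_⟩, funext fun ⟨x, hx⟩ => dif_pos hx⟩
    · simp [v, hx, (hE x).not.2 hx]
    · by_cases hxE : x ∈ E
      · by_cases hxD : x ∈ D
        · have : σ x ∉ D := fun h => (hD x).1 h hxD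
          simp [v, hxE, hxD, (hE x).2 hxE, this, hσ x]
        · have : σ x ∈ D := (hD x).2 hxD
          simp only [v, Set.mem_inter_iff, hxE, hxD, (hE x).2 hxE, this, hσ x, and_true,
            and_false, dite_false, dite_true]
          rw [← mul_assoc, mul_comm (c x), hc, one_mul]
      · simp [v, hxE, (hE x).not.2 hxE, hσ x]

variable [Fintype ι]

theorem two_mul_finrank_twistedSubspace (hσ : Involutive σ) (hc : ∀ x, c (σ x) * c x = 1)
    (hE : ∀ x, σ x ∈ E ↔ x ∈ E) (hD : ∀ x, σ x ∈ D ↔ x ∉ D) :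
    2 * Module.finrank K (twistedSubspace σ c E) = E.ncard := by
  classical
  have hswap : σ '' (E ∩ D) = E \ D := by
    ext x
    rw [Set.image_eq_preimage_of_inverse hσ.leftInverse hσ.rightInverse]
    simp [hE, hD]
  rw [(twistedSubspaceRestrictEquiv hσ hc hE hD).finrank_eq, Module.finrank_fintype_fun_eq_card,
    ← Nat.card_eq_fintype_card, Nat.card_coe_set_eq, two_mul]
  nth_rw 2 [← Set.ncard_image_of_injective _ hσ.injective]
  rw [hswap, Set.ncard_inter_add_ncard_sdiff_eq_ncard]

end Twisted

section Words

variable {α : Type*}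

theorem involutive_rev_comp : Involutive (Fin.rev ∘ · : (α → Fin 2) → α → Fin 2) :=
  fun S => funext fun a => Fin.rev_rev (S a)

def revPair : (α → Fin 2) × (α → Fin 2) → (α → Fin 2) × (α → Fin 2) :=
  Prod.map (Fin.rev ∘ ·) (Fin.rev ∘ ·)

theorem involutive_revPair : Involutive (revPair (α := α)) :=
  involutive_rev_comp.prodMap involutive_rev_comp

variable [Fintype α]

def weight (S : α → Fin 2) : ℕ := ∑ a, (S a : ℕ)

theorem weight_eq_card_filter (S : α → Fin 2) : weight S = #{a | S a = 1} := by
  rw [weight, card_filter]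
  refine sum_congr rfl fun a _ => ?_
  generalize S a = s
  fin_cases s <;> rfl

theorem weight_add_weight_rev (S : α → Fin 2) :
    weight S + weight (Fin.rev ∘ S) = Fintype.card α := by
  rw [weight, weight, ← sum_add_distrib, Fintype.card_eq_sum_ones]
  refine sum_congr rfl fun a _ => ?_
  simp only [Function.comp_apply, Fin.val_rev]
  omega

theorem weight_sumElim {β : Type*} [Fintype β] (S : α → Fin 2) (T : β → Fin 2) :
    weight (Sum.elim S T) = weight S + weight T := by
  simp [weight, Fintype.sum_sum_type]

def finTwoArrowEquivFinset [DecidableEq α] : (α → Fin 2) ≃ Finset α where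
  toFun S := {a | S a = 1}
  invFun s a := if a ∈ s then 1 else 0
  left_inv S := funext fun a => by
    by_cases h : S a = 1
    · simp [h]
    · simp [h]; omega
  right_inv s := by ext a; by_cases a ∈ s <;> simp [*]

theorem card_weight_eq (m : ℕ) :
    Nat.card {S : α → Fin 2 // weight S = m} = (Fintype.card α).choose m := by
  classical
  rw [← Fintype.card_finset_len, ← Nat.card_eq_fintype_card]
  exact Nat.card_congr <| finTwoArrowEquivFinset.subtypeEquiv fun S => by
    rw [weight_eq_card_filter]; rfl

def equalWeight : Set ((α → Fin 2) × (α → Fin 2)) := {p | weight p.1 = weight p.2}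

/-- `(S, T) ↦ S ⊔ rev T` turns pairs of equal weight into words of weight `card α`
on `α ⊕ α`. -/
theorem ncard_equalWeight :
    (equalWeight (α := α)).ncard = (2 * Fintype.card α).choose (Fintype.card α) := by
  let e : (α ⊕ α → Fin 2) ≃ (α → Fin 2) × (α → Fin 2) :=
    (Equiv.sumArrowEquivProdArrow α α (Fin 2)).trans
      (Equiv.prodCongr (Equiv.refl _) (Equiv.arrowCongr (Equiv.refl α) Fin.revPerm))
  have he : ∀ U, weight U = Fintype.card α ↔ e U ∈ equalWeight := by
    intro U
    have hsplit : U = Sum.elim (U ∘ Sum.inl) (U ∘ Sum.inr) := by ext (a | a) <;> rfl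
    have hrev := weight_add_weight_rev (U ∘ Sum.inr)
    rw [hsplit, weight_sumElim]
    change _ ↔ weight (U ∘ Sum.inl) = weight (Fin.rev ∘ U ∘ Sum.inr)
    omega
  rw [← Nat.card_coe_set_eq, ← Nat.card_congr (e.subtypeEquiv he), card_weight_eq,
    Fintype.card_sum, two_mul]

theorem revPair_mem_equalWeight_iff (p : (α → Fin 2) × (α → Fin 2)) :
    revPair p ∈ equalWeight ↔ p ∈ equalWeight := by
  have := weight_add_weight_rev p.1
  have := weight_add_weight_rev p.2
  change weight (Fin.rev ∘ p.1) = weight (Fin.rev ∘ p.2) ↔ weight p.1 = weight p.2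
  omega

end Words

section MonomialMatrix

variable {K ι : Type*} [Field K] [DecidableEq ι]

def monomialMatrix (q : ι → ι) (w : ι → K) : Matrix ι ι K :=
  Matrix.of fun S T => if S = q T then w T else 0

theorem monomialMatrix_id (w : ι → K) : monomialMatrix id w = Matrix.diagonal w := by
  ext S T
  by_cases h : S = T <;> simp [monomialMatrix, h]

variable [Fintype ι]

theorem toMatrixAlgEquiv_eq_monomialMatrix {M : Type*} [AddCommGroup M] [Module K M]
    (b : Module.Basis ι K M) {f : M →ₗ[K] M} {q : ι → ι} {w : ι → K}
    (hf : ∀ T, f (b T) = w T • b (q T)) :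
    LinearMap.toMatrixAlgEquiv b f = monomialMatrix q w := by
  ext S T
  simp [LinearMap.toMatrixAlgEquiv_apply, hf, monomialMatrix, Finsupp.single_apply, eq_comm]

theorem commute_monomialMatrix_iff {q : ι → ι} (hq : Involutive q) (w : ι → K)
    (M : Matrix ι ι K) :
    Commute M (monomialMatrix q w) ↔ ∀ S T, M S T * w (q T) = w (q S) * M (q S) (q T) := by
  have hMP : ∀ S T, (M * monomialMatrix q w) S T = M S (q T) * w T := by
    intro S T
    simp [monomialMatrix, Matrix.mul_apply]
  have hPM : ∀ S T, (monomialMatrix q w * M) S T = w (q S) * M (q S) T := by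
    intro S T
    simp only [monomialMatrix, Matrix.mul_apply, Matrix.of_apply, ite_mul, zero_mul]
    rw [Fintype.sum_eq_single (q S) fun U hU => if_neg fun h => hU (by rw [h, hq]),
      if_pos (hq S).symm]
  rw [commute_iff_eq, ← Matrix.ext_iff]
  refine forall_congr' fun S => hq.surjective.forall.trans (forall_congr' fun T => ?_)
  rw [hMP, hPM, hq T]

theorem commute_diagonal_iff (d : ι → K) (M : Matrix ι ι K) :
    Commute M (Matrix.diagonal d) ↔ ∀ S T, d S ≠ d T → M S T = 0 := by
  rw [← monomialMatrix_id, commute_monomialMatrix_iff fun _ => rfl]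
  refine forall₂_congr fun S T => ⟨fun h hd => ?_, fun h => ?_⟩
  · have : M S T * (d T - d S) = 0 := by simp only [id] at h; linear_combination h
    exact (mul_eq_zero.1 this).resolve_right (sub_ne_zero.2 (Ne.symm hd))
  · by_cases hd : d S = d T
    · simp [hd, mul_comm]
    · simp [h hd]

end MonomialMatrix

theorem mem_equivEnd_iff_of_closure_eq_top {G W : Type*} [Group G] [AddCommGroup W]
    [Module ℂ W] (ρ : Representation ℂ G W) {s : Set G} (hs : Subgroup.closure s = ⊤)
    (f : W →ₗ[ℂ] W) : f ∈ equivEnd ρ ↔ ∀ g ∈ s, Commute f (ρ g) := by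
  refine ⟨fun hf g _ => hf g, fun hf g => show Commute f (ρ g) from ?_⟩
  induction hs ▸ Subgroup.mem_top g using Subgroup.closure_induction with
  | mem x hx => exact hf x hx
  | one => exact (map_one ρ).symm ▸ Commute.one_right f
  | mul x y _ _ hx hy => exact (map_mul ρ x y).symm ▸ hx.mul_right hy
  | inv x _ hx =>
    rw [← ρ.asGroupHom_apply, map_inv]
    exact (ρ.asGroupHom_apply x ▸ hx).units_inv_right

def tensorBasis : (j : ℕ) → Module.Basis (Fin (j + 1) → Fin 2) ℂ (TPow j)
  | 0 => (Pi.basisFun ℂ (Fin 2)).reindex (Equiv.funUnique (Fin 1) (Fin 2)).symm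
  | (j + 1) => ((tensorBasis j).tensorProduct (Pi.basisFun ℂ (Fin 2))).reindex
      ((Equiv.prodComm _ _).trans (Fin.snocEquiv fun _ => Fin 2))

theorem tensorBasis_zero_apply (S : Fin 1 → Fin 2) :
    tensorBasis 0 S = (Pi.single (S 0) 1 : V2) := by
  show ((Pi.basisFun ℂ (Fin 2)).reindex _) S = _
  rw [Module.Basis.reindex_apply]
  simp

theorem tensorBasis_succ_apply (j : ℕ) (S : Fin (j + 2) → Fin 2) :
    tensorBasis (j + 1) S =
      tensorBasis j (Fin.init S) ⊗ₜ[ℂ] (Pi.single (S (Fin.last (j + 1))) 1 : V2) := by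
  show ((_ : Module.Basis _ ℂ (TPow j ⊗[ℂ] V2)).reindex _) S = _
  rw [Module.Basis.reindex_apply, Module.Basis.tensorProduct_apply]
  simp

theorem TPowRep_tensorBasis {G : Subgroup (GL (Fin 2) ℂ)} {g : G} {u : Fin 2 → ℂ}
    {p : Fin 2 → Fin 2} (hg : ∀ s, stdRep G g (Pi.single s 1) = u s • Pi.single (p s) 1) :
    ∀ (j : ℕ) (S : Fin (j + 1) → Fin 2),
      TPowRep G j g (tensorBasis j S) = (∏ i, u (S i)) • tensorBasis j (p ∘ S)
  | 0, S => by
    rw [tensorBasis_zero_apply, tensorBasis_zero_apply, Fin.prod_univ_one]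
    exact hg (S 0)
  | j + 1, S => by
    rw [tensorBasis_succ_apply, tensorBasis_succ_apply]
    erw [Representation.tprod_apply, TensorProduct.map_tmul]
    rw [TPowRep_tensorBasis hg j, hg, TensorProduct.smul_tmul_smul,
      Fin.prod_univ_castSucc (n := j + 1)]
    rfl

theorem Complex.exp_mul_I_pow_injective {t : ℝ} (ht : Irrational (t / Real.pi)) :
    Injective fun n : ℕ => Complex.exp (t * Complex.I) ^ n := by
  intro a b h
  simp only [← Complex.exp_nat_mul, Complex.exp_eq_exp_iff_exists_int] at h
  obtain ⟨m, hm⟩ := h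
  have him := congrArg Complex.im hm
  simp at him
  by_contra hne
  have hab : ((a : ℤ) - b : ℤ) ≠ 0 := sub_ne_zero.2 (Nat.cast_injective.ne hne)
  refine (irrational_iff_ne_rational _).1 ht (2 * m) (a - b) hab ?_
  have hab' : ((a : ℝ) - b) ≠ 0 := by exact_mod_cast hab
  push_cast
  field_simp
  linear_combination him

section Dicyclic

variable {α : Type*} [Fintype α]

def wordSign (S : α → Fin 2) : ℂ := (-1) ^ weight S

theorem wordSign_mul_self (S : α → Fin 2) : wordSign S * wordSign S = 1 := by
  rw [wordSign, ← mul_pow]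
  norm_num

theorem wordSign_mul_wordSign_rev (S : α → Fin 2) :
    wordSign S * wordSign (Fin.rev ∘ S) = (-1) ^ Fintype.card α := by
  rw [wordSign, wordSign, ← pow_add, weight_add_weight_rev]

def pairSign (p : (α → Fin 2) × (α → Fin 2)) : ℂ :=
  wordSign (Fin.rev ∘ p.1) * wordSign (Fin.rev ∘ p.2)

theorem pairSign_revPair_mul_pairSign (p : (α → Fin 2) × (α → Fin 2)) :
    pairSign (revPair p) * pairSign p = 1 := by
  have h₁ : Fin.rev ∘ Fin.rev ∘ p.1 = p.1 := involutive_rev_comp p.1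
  have h₂ : Fin.rev ∘ Fin.rev ∘ p.2 = p.2 := involutive_rev_comp p.2
  rw [pairSign, pairSign, revPair, Prod.map_fst, Prod.map_snd, h₁, h₂, mul_mul_mul_comm,
    wordSign_mul_wordSign_rev, wordSign_mul_wordSign_rev, ← mul_pow]
  norm_num

variable [DecidableEq α]

theorem commute_monomialMatrix_rev_wordSign_iff (M : Matrix (α → Fin 2) (α → Fin 2) ℂ) :
    Commute M (monomialMatrix (Fin.rev ∘ ·) wordSign) ↔
      ∀ S T, M (Fin.rev ∘ S) (Fin.rev ∘ T) = pairSign (S, T) * M S T := by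
  rw [commute_monomialMatrix_iff involutive_rev_comp]
  unfold pairSign
  refine forall₂_congr fun S T => ⟨fun h => ?_, fun h => ?_⟩
  · linear_combination (-wordSign (Fin.rev ∘ S)) * h -
      M (Fin.rev ∘ S) (Fin.rev ∘ T) * wordSign_mul_self (Fin.rev ∘ S)
  · linear_combination (-wordSign (Fin.rev ∘ S)) * h -
      wordSign (Fin.rev ∘ T) * M S T * wordSign_mul_self (Fin.rev ∘ S)

theorem commute_diagonal_mul_pow_weight_iff {c w : ℂ} (hc : c ≠ 0)
    (hw : Injective fun n : ℕ => w ^ n) (M : Matrix (α → Fin 2) (α → Fin 2) ℂ) :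
    Commute M (Matrix.diagonal fun S => c * w ^ weight S) ↔
      ∀ S T, weight S ≠ weight T → M S T = 0 := by
  rw [commute_diagonal_iff]
  refine forall₂_congr fun S T => imp_congr_left ?_
  rw [Ne, Ne, mul_right_inj' hc, hw.eq_iff]

end Dicyclic

theorem stdRep_apply_single_of_eq_X {G : Subgroup (GL (Fin 2) ℂ)} {g : G}
    (hg : ((g : GL (Fin 2) ℂ) : Matrix (Fin 2) (Fin 2) ℂ) = !![0, -1; 1, 0]) (s : Fin 2) :
    stdRep G g (Pi.single s 1) = (-1 : ℂ) ^ (s : ℕ) • Pi.single (Fin.rev s) 1 := by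
  change Matrix.toLin' _ _ = _
  rw [hg, Matrix.toLin'_apply, Matrix.mulVec_single]
  funext i
  fin_cases s <;> fin_cases i <;> simp

/-- Writing the eigenvalues as `z * w ^ s` makes the eigenvalue on a word `S` equal to
`z ^ k * w ^ weight S`. -/
theorem stdRep_apply_single_of_eq_A {θ : ℝ} {G : Subgroup (GL (Fin 2) ℂ)} {g : G}
    (hg : ((g : GL (Fin 2) ℂ) : Matrix (Fin 2) (Fin 2) ℂ) =
      !![Complex.exp (θ * Complex.I), 0; 0, Complex.exp (-(θ * Complex.I))]) (s : Fin 2) :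
    stdRep G g (Pi.single s 1) =
      (Complex.exp (θ * Complex.I) * Complex.exp (↑(-2 * θ) * Complex.I) ^ (s : ℕ)) •
        Pi.single s 1 := by
  change Matrix.toLin' _ _ = _
  rw [hg, Matrix.toLin'_apply, Matrix.mulVec_single]
  funext i
  fin_cases s <;> fin_cases i <;> simp [← Complex.exp_add]
  ring_nf

section TensorPower

variable {θ : ℝ} {X A : GL (Fin 2) ℂ}

theorem toMatrixAlgEquiv_TPowRep_of_eq_X {G : Subgroup (GL (Fin 2) ℂ)} {g : G}
    (hg : ((g : GL (Fin 2) ℂ) : Matrix (Fin 2) (Fin 2) ℂ) = !![0, -1; 1, 0]) (j : ℕ) :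
    LinearMap.toMatrixAlgEquiv (tensorBasis j) (TPowRep G j g) =
      monomialMatrix (Fin.rev ∘ ·) wordSign := by
  refine toMatrixAlgEquiv_eq_monomialMatrix _ fun S => ?_
  rw [TPowRep_tensorBasis (stdRep_apply_single_of_eq_X hg), prod_pow_eq_pow_sum]
  rfl

theorem toMatrixAlgEquiv_TPowRep_of_eq_A {G : Subgroup (GL (Fin 2) ℂ)} {g : G}
    (hg : ((g : GL (Fin 2) ℂ) : Matrix (Fin 2) (Fin 2) ℂ) =
      !![Complex.exp (θ * Complex.I), 0; 0, Complex.exp (-(θ * Complex.I))]) (j : ℕ) :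
    LinearMap.toMatrixAlgEquiv (tensorBasis j) (TPowRep G j g) =
      Matrix.diagonal fun S => Complex.exp (θ * Complex.I) ^ (j + 1) *
        Complex.exp (↑(-2 * θ) * Complex.I) ^ weight S := by
  rw [← monomialMatrix_id]
  refine toMatrixAlgEquiv_eq_monomialMatrix _ fun S => ?_
  rw [TPowRep_tensorBasis (stdRep_apply_single_of_eq_A hg), prod_mul_distrib, prod_const,
    card_univ, Fintype.card_fin, prod_pow_eq_pow_sum]
  rfl

theorem mem_equivEnd_TPowRep_closure_iff (hθ : Irrational (θ / Real.pi))
    (hX : (X : Matrix (Fin 2) (Fin 2) ℂ) = !![0, -1; 1, 0])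
    (hA : (A : Matrix (Fin 2) (Fin 2) ℂ) =
      !![Complex.exp (θ * Complex.I), 0; 0, Complex.exp (-(θ * Complex.I))])
    (j : ℕ) (f : TPow j →ₗ[ℂ] TPow j) :
    f ∈ equivEnd (TPowRep (Subgroup.closure {X, A}) j) ↔
      uncurry (LinearMap.toMatrixAlgEquiv (tensorBasis j) f) ∈
        twistedSubspace revPair pairSign equalWeight := by
  set G := Subgroup.closure {X, A}
  set ρ := TPowRep G j
  set e := LinearMap.toMatrixAlgEquiv (tensorBasis j)
  let gX : G := ⟨X, Subgroup.subset_closure (by simp)⟩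
  let gA : G := ⟨A, Subgroup.subset_closure (by simp)⟩
  have hgen : (∀ g ∈ ((↑) ⁻¹' {X, A} : Set G), Commute f (ρ g)) ↔
      Commute f (ρ gX) ∧ Commute f (ρ gA) := by
    refine ⟨fun h => ⟨h gX (Or.inl rfl), h gA (Or.inr rfl)⟩, ?_⟩
    rintro ⟨hfX, hfA⟩ g (hg | hg)
    · rwa [show g = gX from Subtype.ext hg]
    · rwa [show g = gA from Subtype.ext hg]
  have he : ∀ g, Commute f (ρ g) ↔ Commute (e f) (e (ρ g)) := fun g => by
    rw [commute_iff_eq, commute_iff_eq, ← e.injective.eq_iff, map_mul, map_mul]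
  have hw : Injective fun n : ℕ => Complex.exp (↑(-2 * θ) * Complex.I) ^ n :=
    Complex.exp_mul_I_pow_injective <| by
      simpa [mul_div_assoc, neg_div] using hθ.intCast_mul (m := -2) (by norm_num)
  rw [mem_equivEnd_iff_of_closure_eq_top ρ Subgroup.closure_closure_coe_preimage, hgen, he, he,
    toMatrixAlgEquiv_TPowRep_of_eq_X hX, toMatrixAlgEquiv_TPowRep_of_eq_A hA,
    commute_monomialMatrix_rev_wordSign_iff, commute_diagonal_mul_pow_weight_iff (by simp) hw,
    mem_twistedSubspace, and_comm]
  simp only [Prod.forall]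
  exact Iff.rfl

theorem two_mul_finrank_equivEnd_TPowRep_closure (hθ : Irrational (θ / Real.pi))
    (hX : (X : Matrix (Fin 2) (Fin 2) ℂ) = !![0, -1; 1, 0])
    (hA : (A : Matrix (Fin 2) (Fin 2) ℂ) =
      !![Complex.exp (θ * Complex.I), 0; 0, Complex.exp (-(θ * Complex.I))]) (j : ℕ) :
    2 * Module.finrank ℂ (equivEnd (TPowRep (Subgroup.closure {X, A}) j)) =
      (2 * (j + 1)).choose (j + 1) := by
  let Φ : Module.End ℂ (TPow j) ≃ₗ[ℂ]
      ((Fin (j + 1) → Fin 2) × (Fin (j + 1) → Fin 2) → ℂ) :=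
    (LinearMap.toMatrixAlgEquiv (tensorBasis j)).toLinearEquiv ≪≫ₗ
      (Matrix.ofLinearEquiv ℂ).symm ≪≫ₗ (LinearEquiv.curry ℂ ℂ _ _).symm
  have hmap : (equivEnd (TPowRep (Subgroup.closure {X, A}) j)).map Φ.toLinearMap =
      twistedSubspace revPair pairSign equalWeight := by
    ext v
    rw [Submodule.mem_map_equiv, mem_equivEnd_TPowRep_closure_iff hθ hX hA]
    exact iff_of_eq (congrArg (· ∈ _) (Φ.apply_symm_apply v))
  have hD : ∀ p : (Fin (j + 1) → Fin 2) × (Fin (j + 1) → Fin 2),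
      Fin.rev (p.1 0) = 0 ↔ ¬ p.1 0 = 0 := by
    intro p
    generalize p.1 0 = s
    fin_cases s <;> decide
  rw [← LinearEquiv.finrank_map_eq Φ, hmap, two_mul_finrank_twistedSubspace involutive_revPair
    pairSign_revPair_mul_pairSign revPair_mem_equalWeight_iff (D := {p | p.1 0 = 0}) hD,
    ncard_equalWeight, Fintype.card_fin]

end TensorPower

/-- For every integer `k ≥ 1`, the endomorphism algebra of the `k`-th tensor power of the
standard representation of the infinite dicyclic group satisfies
`dim_ℂ End_{Dic∞}(V^{⊗k}) = (1/2)·binomial(2k,k)`. -/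
theorem dim_equivEnd_tensorPower_dicyclicInf
    (θ : ℝ) (hθ : Irrational (θ / Real.pi)) (X A : GL (Fin 2) ℂ)
    (hX : (X : Matrix (Fin 2) (Fin 2) ℂ) = !![0, -1; 1, 0])
    (hA : (A : Matrix (Fin 2) (Fin 2) ℂ) =
      !![Complex.exp (θ * Complex.I), 0; 0, Complex.exp (-(θ * Complex.I))])
    (G : Subgroup (GL (Fin 2) ℂ)) (hG : G = Subgroup.closure {X, A})
    (k : ℕ) (hk : 1 ≤ k) :
    (Module.finrank ℂ (equivEnd (TPowRep G (k - 1))) : ℚ) =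
      (Nat.choose (2 * k) k : ℚ) / 2 := by
  subst hG
  obtain ⟨j, rfl⟩ : ∃ j, k = j + 1 := ⟨k - 1, by omega⟩
  rw [Nat.add_sub_cancel, ← two_mul_finrank_equivEnd_TPowRep_closure hθ hX hA j]
  push_cast
  ring
end
end
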